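/- arXiv:1606.00502 — 6 statements merged into one kernel-verified Lean document; each statement's English description precedes it below -/
import Mathlib

section
/- Let S be a set, let R be a relation on S (the specification), and let P be a deterministic relation on S (the function of a program). Then P is correct with respect to R (i.e., P refines R) if and only if dom(R ∩ P) = dom(R). -/
/-- The domain of a relation on `S`. -/
def dom {S : Type*} (R : Set (S × S)) : Set S := {s | ∃ s', (s, s') ∈ R}

/-- `refines R' R`: the relation `R'` refines the relation `R`. -/
def refines {S : Type*} (R' R : Set (S × S)) : Prop :=
  (dom R ×ˢ (Set.univ : Set S)) ∩ (dom R' ×ˢ (Set.univ : Set S)) ∩ (R ∪ R') = R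

/-- A relation is deterministic (a function). -/
def deterministic {S : Type*} (P : Set (S × S)) : Prop :=
  ∀ s s' s'', (s, s') ∈ P → (s, s'') ∈ P → s' = s''

/-!
`R'` refines `R` exactly when `R'` is defined wherever `R` is and, restricted to `dom R`,
only produces outputs allowed by `R`. For a deterministic `R'` the single output at each
`s ∈ dom R` is allowed by `R` precisely when `s ∈ dom (R ∩ R')`.
-/

section

variable {S : Type*}

theorem dom_mono {R R' : Set (S × S)} (h : R ⊆ R') : dom R ⊆ dom R' :=
  fun _ ⟨t, ht⟩ => ⟨t, h ht⟩

theorem refines_iff (R' R : Set (S × S)) :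
    refines R' R ↔ dom R ⊆ dom R' ∧ ∀ s t, s ∈ dom R → (s, t) ∈ R' → (s, t) ∈ R := by
  constructor
  · intro h
    refine ⟨fun s ⟨t, hst⟩ => ?_, fun s t hs hst => ?_⟩
    · rw [← h] at hst
      exact hst.1.2.1
    · rw [← h]
      exact ⟨⟨⟨hs, trivial⟩, ⟨t, hst⟩, trivial⟩, Or.inr hst⟩
  · rintro ⟨hdom, hout⟩
    ext ⟨s, t⟩
    constructor
    · rintro ⟨⟨⟨hs, -⟩, -⟩, hR | hR'⟩
      exacts [hR, hout s t hs hR']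
    · intro hst
      have hs : s ∈ dom R := ⟨t, hst⟩
      exact ⟨⟨⟨hs, trivial⟩, hdom hs, trivial⟩, Or.inl hst⟩

theorem deterministic.subset_dom_inter_iff {P : Set (S × S)} (hP : deterministic P)
    (R : Set (S × S)) :
    dom R ⊆ dom (R ∩ P) ↔ dom R ⊆ dom P ∧ ∀ s t, s ∈ dom R → (s, t) ∈ P → (s, t) ∈ R := by
  constructor
  · intro h
    refine ⟨h.trans (dom_mono Set.inter_subset_right), fun s t hs hst => ?_⟩
    obtain ⟨u, huR, huP⟩ := h hs
    rwa [hP s t u hst huP]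
  · rintro ⟨hdom, hout⟩ s hs
    obtain ⟨t, hst⟩ := hdom hs
    exact ⟨t, hout s t hs hst, hst⟩

end

/-- A deterministic program `P` is correct with respect to specification `R`
(i.e., `P` refines `R`) if and only if `dom (R ∩ P) = dom R`. -/
theorem stmt_0 {S : Type*} (R P : Set (S × S)) (hP : deterministic P) :
    refines P R ↔ dom (R ∩ P) = dom R := by
  rw [refines_iff, ← hP.subset_dom_inter_iff, Set.Subset.antisymm_iff,
    and_iff_right (dom_mono Set.inter_subset_left)]
end

section
/- The refinement relation is antisymmetric: for relations R and R' on a set S, if R' refines R and R refines R', then R = R'. -/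
section Refines

variable {S : Type*} {R R' : Set (S × S)}

theorem dom_subset_of_refines (h : refines R' R) : dom R ⊆ dom R' := by
  rintro s ⟨t, hst⟩
  rw [← h] at hst
  exact hst.1.2.1

theorem mem_of_refines (h : refines R' R) {s t : S} (hs : s ∈ dom R) (hst : (s, t) ∈ R') :
    (s, t) ∈ R := by
  rw [← h]
  exact ⟨⟨⟨hs, trivial⟩, ⟨⟨t, hst⟩, trivial⟩⟩, Or.inr hst⟩

end Refines

/-- The refinement relation is antisymmetric. -/
theorem stmt_2 {S : Type*} (R R' : Set (S × S))
    (h1 : refines R' R) (h2 : refines R R') : R = R' := by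
  ext ⟨s, t⟩
  constructor
  · intro hst
    exact mem_of_refines h2 (dom_subset_of_refines h1 ⟨t, hst⟩) hst
  · intro hst
    exact mem_of_refines h1 (dom_subset_of_refines h2 ⟨t, hst⟩) hst
end

section
/- Let R be a specification on a set S and let f, f' : S → S be (total, deterministic) programs with graphs P and P'. Then f' passes the relative-correctness oracle over f on every input, i.e., Ω'(s, f'(s)) ≡ (Ω(s, f(s)) ⇒ Ω(s, f'(s))) holds for all s ∈ S where Ω(s,s') ≡ (s ∈ dom(R) ⇒ (s,s') ∈ R), if and only if P' is more-correct than P with respect to R, i.e., dom(R ∩ P) ⊆ dom(R ∩ P'). -/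
theorem dom_inter_graph {S : Type*} (R : Set (S × S)) (f : S → S) :
    dom (R ∩ {p : S × S | p.2 = f p.1}) = {s | (s, f s) ∈ R} := by
  ext s
  constructor
  · rintro ⟨t, hR, ht : t = f s⟩
    subst ht
    exact hR
  · exact fun hR => ⟨f s, hR, rfl⟩

/-- A total deterministic program `f'` passes the relative-correctness oracle over
`f` on every input iff its graph `P'` is more-correct than the graph `P` of `f`
with respect to `R`. -/
theorem stmt_10 {S : Type*} (R : Set (S × S)) (f f' : S → S)
    (P P' : Set (S × S))
    (hP : P = {p : S × S | p.2 = f p.1}) (hP' : P' = {p : S × S | p.2 = f' p.1}) :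
    (∀ s : S, (s ∈ dom R → (s, f s) ∈ R) → (s ∈ dom R → (s, f' s) ∈ R)) ↔
      dom (R ∩ P) ⊆ dom (R ∩ P') := by
  subst hP hP'
  rw [dom_inter_graph, dom_inter_graph]
  -- `(s, f s) ∈ R` already puts `s` in `dom R`, so the oracle's premise is automatic there.
  exact ⟨fun h s hf => h s (fun _ => hf) ⟨f s, hf⟩, fun h s hΩ hs => h (hΩ hs)⟩
end

section
/- (Perfect recall of relative-correctness testing.) Let R be a specification on a set S, let P and P' be relations on S with P' deterministic, and suppose P' is more-correct than P with respect to R. Then P' runs successfully on every element of the competence domain of P: for every s ∈ dom(R ∩ P) and every s' with (s,s') ∈ P', we have (s,s') ∈ R. -/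
theorem deterministic.mem_of_mem_dom_inter {S : Type*} {R P : Set (S × S)}
    (hP : deterministic P) {s s' : S} (hs : s ∈ dom (R ∩ P)) (hs' : (s, s') ∈ P) :
    (s, s') ∈ R := by
  obtain ⟨t, htR, htP⟩ := hs
  rwa [hP s s' t hs' htP]

/-- Perfect recall of relative-correctness testing: if the deterministic relation
`P'` is more-correct than `P` with respect to `R`, then `P'` runs successfully
on every element of the competence domain of `P`. -/
theorem stmt_11 {S : Type*} (R P P' : Set (S × S))
    (hdet : deterministic P') (hmc : dom (R ∩ P) ⊆ dom (R ∩ P')) :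
    ∀ s ∈ dom (R ∩ P), ∀ s', (s, s') ∈ P' → (s, s') ∈ R :=
  fun _ hs _ hs' => hdet.mem_of_mem_dom_inter (hmc hs) hs'
end

section
/- (Poor precision of absolute-correctness-based repair.) There exist a set S, a specification R on S, deterministic relations P and P' on S, and a nonempty test set T ⊆ dom(R), such that P' passes the absolute-correctness test on T (i.e., T ⊆ dom(R ∩ P')) and yet P' is not more-correct than P with respect to R (i.e., dom(R ∩ P) ⊄ dom(R ∩ P')). -/
/-! Take the identity on `Bool` as both specification and program, and let the mutant be the
identity restricted to `true`. The test set `{true}` cannot see that the mutant has lost the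
input `false`, on which the original program was correct. -/

section Relations

variable {S : Type*}

theorem deterministic.mono {P Q : Set (S × S)} (hP : deterministic P) (hQP : Q ⊆ P) :
    deterministic Q :=
  fun s _ _ h h' => hP s _ _ (hQP h) (hQP h')

theorem deterministic_diagonal : deterministic (Set.diagonal S) :=
  fun _ _ _ h h' => h.symm.trans h'

@[simp]
theorem dom_diagonal : dom (Set.diagonal S) = Set.univ :=
  Set.eq_univ_of_forall fun s => ⟨s, rfl⟩

@[simp]
theorem dom_singleton (a b : S) : dom {(a, b)} = {a} := by
  ext s
  simp [dom]

end Relations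

/-- Poor precision of absolute-correctness-based repair: a mutant may pass the
absolute-correctness test on a nonempty test set `T ⊆ dom R` and yet not be
more-correct than the original program. -/
theorem stmt_12 :
    ∃ (S : Type) (R P P' : Set (S × S)) (T : Set S),
      deterministic P ∧ deterministic P' ∧
      T.Nonempty ∧ T ⊆ dom R ∧
      T ⊆ dom (R ∩ P') ∧
      ¬ dom (R ∩ P) ⊆ dom (R ∩ P') := by
  have hP' : ({(true, true)} : Set (Bool × Bool)) ⊆ Set.diagonal Bool :=
    Set.singleton_subset_iff.mpr rfl
  have hRP' : Set.diagonal Bool ∩ {(true, true)} = {(true, true)} := Set.inter_eq_right.mpr hP'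
  refine ⟨Bool, Set.diagonal Bool, Set.diagonal Bool, {(true, true)}, {true},
    deterministic_diagonal, deterministic_diagonal.mono hP', Set.singleton_nonempty _,
    ?_, ?_, ?_⟩
  · simp
  · simp [hRP']
  · rw [Set.inter_self, dom_diagonal, hRP', dom_singleton]
    exact fun h => Bool.false_ne_true (h (Set.mem_univ false))
end

section
/- Let N ≥ 1 be a natural number and let S be the state space whose states s consist of an integer array a(s) : {0,...,N} → ℤ together with integer variables x(s) and i(s). Let R = {(s,s') | x(s') = Σ_{k=1}^{N} a(s)[k]} and let P = {(s,s') | a(s') = a(s) ∧ i(s') = N ∧ x(s') = Σ_{k=0}^{N-1} a(s)[k]} (the function of the array-summation program p). Then the competence domain of P with respect to R is dom(R ∩ P) = {s | a(s)[0] = a(s)[N]}. -/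
/-- State space of the array-summation program: an array `a : {0,…,N} → ℤ` and
integer variables `x` and `i`. -/
structure St (N : ℕ) where
  a : Fin (N + 1) → ℤ
  x : ℤ
  i : ℤ

namespace Fin

variable {M : Type*} {n : ℕ}

theorem add_sum_Ioi_zero [AddCommMonoid M] (f : Fin (n + 1) → M) :
    f 0 + ∑ i ∈ Finset.Ioi 0, f i = ∑ i, f i := by
  rw [sum_Ioi_zero, sum_univ_succ]

theorem sum_Iio_last_add [AddCommMonoid M] (f : Fin (n + 1) → M) :
    ∑ i ∈ Finset.Iio (last n), f i + f (last n) = ∑ i, f i := by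
  rw [Iio_last_eq_map, Finset.sum_map, sum_univ_castSucc]
  rfl

/-- Both sums consist of the middle entries plus one end, so they agree iff the ends do. -/
theorem sum_Ioi_zero_eq_sum_Iio_last_iff [AddCancelCommMonoid M] (f : Fin (n + 1) → M) :
    ∑ i ∈ Finset.Ioi 0, f i = ∑ i ∈ Finset.Iio (last n), f i ↔ f 0 = f (last n) := by
  rw [← add_right_inj (f 0), add_sum_Ioi_zero, ← sum_Iio_last_add, add_comm (f 0),
    add_right_inj, eq_comm]

end Fin

theorem stmt_15_general (N : ℕ)
    (R : Set (St N × St N))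
    (hR : R = {p : St N × St N |
      p.2.x = ∑ k ∈ Finset.Ioi (0 : Fin (N + 1)), p.1.a k})
    (P : Set (St N × St N))
    (hP : P = {p : St N × St N |
      p.2.a = p.1.a ∧ p.2.i = (N : ℤ) ∧
      p.2.x = ∑ k ∈ Finset.Iio (Fin.last N), p.1.a k}) :
    dom (R ∩ P) = {s : St N | s.a 0 = s.a (Fin.last N)} := by
  subst hR hP
  ext s
  simp only [dom, Set.mem_ofPred_eq, Set.mem_inter_iff]
  constructor
  · rintro ⟨s', hxR, -, -, hxP⟩
    exact (Fin.sum_Ioi_zero_eq_sum_Iio_last_iff s.a).1 (hxR.symm.trans hxP)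
  · intro h
    refine ⟨⟨s.a, ∑ k ∈ Finset.Ioi 0, s.a k, N⟩, rfl, rfl, rfl, ?_⟩
    exact (Fin.sum_Ioi_zero_eq_sum_Iio_last_iff s.a).2 h

/-- The competence domain of the array-summation program
`P = {(s,s') | a' = a ∧ i' = N ∧ x' = Σ_{k=0}^{N-1} a[k]}` with respect to the
specification `R = {(s,s') | x' = Σ_{k=1}^{N} a[k]}` is `{s | a[0] = a[N]}`. -/
theorem stmt_15 (N : ℕ) (hN : 1 ≤ N)
    (R : Set (St N × St N))
    (hR : R = {p : St N × St N |
      p.2.x = ∑ k ∈ Finset.Ioi (0 : Fin (N + 1)), p.1.a k})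
    (P : Set (St N × St N))
    (hP : P = {p : St N × St N |
      p.2.a = p.1.a ∧ p.2.i = (N : ℤ) ∧
      p.2.x = ∑ k ∈ Finset.Iio (Fin.last N), p.1.a k}) :
    dom (R ∩ P) = {s : St N | s.a 0 = s.a (Fin.last N)} :=
  stmt_15_general N R hR P hP
end
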